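/- arXiv:2405.15680 — 7 statements merged into one kernel-verified Lean document; each statement's English description precedes it below -/
import Mathlib

section
/- Let f : C → ℝ be convex on a convex set C in a real vector space, x₁,…,xₙ ∈ C, and let p, q be positive n-tuples with ∑pᵢ = ∑qᵢ = 1. Then J(f,x,p) ≥ m · J(f,x,q), where J(f,x,w) = ∑wᵢ f(xᵢ) − f(∑wᵢ xᵢ) and m = min_{1≤i≤n} (pᵢ/qᵢ). -/
/-- Dragomir's lower bound: `J(f,x,p) ≥ m · J(f,x,q)` with `m = minᵢ pᵢ/qᵢ`,
for the normalized Jensen functional `J(f,x,w) = ∑ wᵢ f(xᵢ) − f(∑ wᵢ xᵢ)`. -/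
theorem stmt0 {E : Type*} [AddCommGroup E] [Module ℝ E] {C : Set E}
    (f : E → ℝ) (hf : ConvexOn ℝ C f) {n : ℕ} (hn : 0 < n)
    (x : Fin n → E) (hx : ∀ i, x i ∈ C)
    (p q : Fin n → ℝ) (hp : ∀ i, 0 < p i) (hq : ∀ i, 0 < q i)
    (hps : ∑ i, p i = 1) (hqs : ∑ i, q i = 1) :
    (Finset.univ.inf' ⟨⟨0, hn⟩, Finset.mem_univ _⟩ (fun i => p i / q i)) *
      (∑ i, q i * f (x i) - f (∑ i, q i • x i)) ≤
    ∑ i, p i * f (x i) - f (∑ i, p i • x i) := by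
  set m : ℝ := Finset.univ.inf' ⟨⟨0, hn⟩, Finset.mem_univ _⟩ (fun i => p i / q i) with hm
  have hm_le : ∀ i : Fin n, m ≤ p i / q i := fun i =>
    Finset.inf'_le _ (Finset.mem_univ i)
  have hm0 : 0 ≤ m := by
    obtain ⟨i, _, hi⟩ := Finset.exists_mem_eq_inf' ⟨⟨0, hn⟩, Finset.mem_univ _⟩
      (fun i => p i / q i)
    rw [hm, hi]
    exact le_of_lt (div_pos (hp i) (hq i))
  have hmq : ∀ i : Fin n, m * q i ≤ p i := by
    intro i
    have := hm_le i
    rw [le_div_iff₀ (hq i)] at this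
    linarith
  -- y = ∑ q i • x i lies in C
  have hy : (∑ i, q i • x i) ∈ C :=
    hf.1.sum_mem (fun i _ => (hq i).le) hqs (fun i _ => hx i)
  -- define combined weights over Option (Fin n)
  set w : Option (Fin n) → ℝ := fun o => o.elim m (fun i => p i - m * q i) with hw
  set g : Option (Fin n) → E := fun o => o.elim (∑ i, q i • x i) x with hg
  have hw0 : ∀ o ∈ (Finset.univ : Finset (Option (Fin n))), 0 ≤ w o := by
    rintro (_ | i) _
    · exact hm0
    · simp only [hw, Option.elim]
      linarith [hmq i]
  have hw1 : ∑ o : Option (Fin n), w o = 1 := by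
    rw [Fintype.sum_option]
    simp only [hw, Option.elim]
    rw [Finset.sum_sub_distrib, ← Finset.mul_sum, hqs, hps]
    ring
  have hgC : ∀ o ∈ (Finset.univ : Finset (Option (Fin n))), g o ∈ C := by
    rintro (_ | i) _
    · exact hy
    · exact hx i
  have hsum : (∑ o : Option (Fin n), w o • g o) = ∑ i, p i • x i := by
    rw [Fintype.sum_option]
    simp only [hw, hg, Option.elim]
    rw [Finset.smul_sum, ← Finset.sum_add_distrib]
    congr 1
    ext i
    rw [sub_smul, mul_smul]
    abel
  have hjensen := hf.map_sum_le hw0 hw1 hgC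
  rw [hsum, Fintype.sum_option] at hjensen
  simp only [hw, hg, Option.elim] at hjensen
  have hexp : ∑ i, (p i - m * q i) * f (x i)
      = ∑ i, p i * f (x i) - m * ∑ i, q i * f (x i) := by
    rw [Finset.mul_sum, ← Finset.sum_sub_distrib]
    congr 1; ext i; ring
  simp only [smul_eq_mul] at hjensen
  rw [hexp] at hjensen
  linarith
end

section
/- Let f : C → ℝ be convex on a convex set C in a real vector space, x₁,…,xₙ ∈ C, and let p, q be positive n-tuples with ∑pᵢ = ∑qᵢ = 1. Then J(f,x,p) ≤ M · J(f,x,q), where M = max_{1≤i≤n} (pᵢ/qᵢ). -/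
/-! If `pᵢ ≤ M qᵢ` for all `i`, write `M q = p + r` with `r ≥ 0`. Then `∑ qᵢ xᵢ` is the convex
combination `M⁻¹ • ∑ pᵢ xᵢ + ∑ (rᵢ / M) • xᵢ`, and Jensen's inequality for it reads
`M f(∑ qᵢ xᵢ) ≤ f(∑ pᵢ xᵢ) + ∑ rᵢ f(xᵢ)`, which rearranges to `J(f,x,p) ≤ M J(f,x,q)`. -/

open Finset

section

variable {𝕜 E ι : Type*} [Field 𝕜] [LinearOrder 𝕜] [IsStrictOrderedRing 𝕜]
  [AddCommGroup E] [Module 𝕜 E]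

def jensenGap (f : E → 𝕜) (s : Finset ι) (w : ι → 𝕜) (x : ι → E) : 𝕜 :=
  ∑ i ∈ s, w i * f (x i) - f (∑ i ∈ s, w i • x i)

theorem ConvexOn.jensenGap_le_mul {C : Set E} {f : E → 𝕜} (hf : ConvexOn 𝕜 C f)
    {s : Finset ι} {x : ι → E} (hx : ∀ i ∈ s, x i ∈ C) {p q : ι → 𝕜} {M : 𝕜}
    (hp : ∀ i ∈ s, 0 ≤ p i) (hps : ∑ i ∈ s, p i = 1) (hqs : ∑ i ∈ s, q i = 1)
    (hpq : ∀ i ∈ s, p i ≤ M * q i) :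
    jensenGap f s p x ≤ M * jensenGap f s q x := by
  have hM : 0 < M := by
    have : (1 : 𝕜) ≤ M := calc
      1 = ∑ i ∈ s, p i := hps.symm
      _ ≤ ∑ i ∈ s, M * q i := sum_le_sum hpq
      _ = M := by rw [← mul_sum, hqs, mul_one]
    linarith
  set r : ι → 𝕜 := fun i => (M * q i - p i) / M
  have hr : ∀ i ∈ s, 0 ≤ r i := fun i hi => div_nonneg (sub_nonneg.2 (hpq i hi)) hM.le
  have hrs : M⁻¹ + ∑ i ∈ s, r i = 1 := by
    simp only [r, ← sum_div, sum_sub_distrib, ← mul_sum, hps, hqs]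
    field_simp
    ring
  have hbary : M⁻¹ • ∑ i ∈ s, p i • x i + ∑ i ∈ s, r i • x i = ∑ i ∈ s, q i • x i := by
    rw [smul_sum, ← sum_add_distrib]
    refine sum_congr rfl fun i _ => ?_
    rw [smul_smul, ← add_smul]
    congr 1
    simp only [r]
    field_simp
    ring
  have hrf : ∑ i ∈ s, r i * f (x i) =
      (M * ∑ i ∈ s, q i * f (x i) - ∑ i ∈ s, p i * f (x i)) / M := by
    rw [mul_sum, ← sum_sub_distrib, sum_div]
    refine sum_congr rfl fun i _ => ?_
    ring
  have hJensen := hf.map_add_sum_le hr hrs hx (inv_nonneg.2 hM.le) (hf.1.sum_mem hp hps hx)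
  simp only [hbary, smul_eq_mul, hrf] at hJensen
  have key : M * f (∑ i ∈ s, q i • x i) ≤
      f (∑ i ∈ s, p i • x i) + (M * ∑ i ∈ s, q i * f (x i) - ∑ i ∈ s, p i * f (x i)) := by
    have := mul_le_mul_of_nonneg_left hJensen hM.le
    rwa [mul_add, mul_inv_cancel_left₀ hM.ne', mul_div_cancel₀ _ hM.ne'] at this
  unfold jensenGap
  linarith

end

/-- Dragomir's upper bound: `J(f,x,p) ≤ M · J(f,x,q)` with `M = maxᵢ pᵢ/qᵢ`. -/
theorem stmt1 {E : Type*} [AddCommGroup E] [Module ℝ E] {C : Set E}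
    (f : E → ℝ) (hf : ConvexOn ℝ C f) {n : ℕ} (hn : 0 < n)
    (x : Fin n → E) (hx : ∀ i, x i ∈ C)
    (p q : Fin n → ℝ) (hp : ∀ i, 0 < p i) (hq : ∀ i, 0 < q i)
    (hps : ∑ i, p i = 1) (hqs : ∑ i, q i = 1) :
    ∑ i, p i * f (x i) - f (∑ i, p i • x i) ≤
    (Finset.univ.sup' ⟨⟨0, hn⟩, Finset.mem_univ _⟩ (fun i => p i / q i)) *
      (∑ i, q i * f (x i) - f (∑ i, q i • x i)) := by
  refine hf.jensenGap_le_mul (fun i _ => hx i) (fun i _ => (hp i).le) hps hqs fun i _ => ?_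
  rw [← div_le_iff₀ (hq i)]
  exact le_sup' (fun i => p i / q i) (mem_univ i)
end

section
/- Let f : [a,b] → ℝ be convex, x ∈ [a,b]^n, and α, β, γ ∈ ℝ^n nonnegative weight tuples each summing to 1 with βᵢ + γᵢ > 0 for all i. Then min_{1≤i≤n} (αᵢ/(βᵢ+γᵢ)) · [J(f,x,β) + J(f,x,γ)] ≤ J(f,x,α). -/
/-- Lower bound of Theorem 4 (Sababheh–Dragomir–Bakherad):
`min_i (αᵢ/(βᵢ+γᵢ)) · [J(f,x,β) + J(f,x,γ)] ≤ J(f,x,α)`. -/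
theorem stmt2 {a b : ℝ} (f : ℝ → ℝ) (hf : ConvexOn ℝ (Set.Icc a b) f)
    {n : ℕ} (hn : 0 < n) (x : Fin n → ℝ) (hx : ∀ i, x i ∈ Set.Icc a b)
    (α β γ : Fin n → ℝ)
    (hα : ∀ i, 0 ≤ α i) (hβ : ∀ i, 0 ≤ β i) (hγ : ∀ i, 0 ≤ γ i)
    (hαs : ∑ i, α i = 1) (hβs : ∑ i, β i = 1) (hγs : ∑ i, γ i = 1)
    (hβγ : ∀ i, 0 < β i + γ i) :
    (Finset.univ.inf' ⟨⟨0, hn⟩, Finset.mem_univ _⟩ (fun i => α i / (β i + γ i))) *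
      ((∑ i, β i * f (x i) - f (∑ i, β i * x i)) +
        (∑ i, γ i * f (x i) - f (∑ i, γ i * x i))) ≤
    ∑ i, α i * f (x i) - f (∑ i, α i * x i) := by
  set m := Finset.univ.inf' ⟨⟨0, hn⟩, Finset.mem_univ _⟩ (fun i => α i / (β i + γ i)) with hm
  have hm0 : 0 ≤ m := by
    apply Finset.le_inf'
    intro i _
    exact div_nonneg (hα i) (hβγ i).le
  have hmle : ∀ i, m * (β i + γ i) ≤ α i := by
    intro i
    have h : m ≤ α i / (β i + γ i) := Finset.inf'_le _ (Finset.mem_univ i)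
    calc m * (β i + γ i) ≤ (α i / (β i + γ i)) * (β i + γ i) :=
          mul_le_mul_of_nonneg_right h (hβγ i).le
      _ = α i := div_mul_cancel₀ _ (hβγ i).ne'
  set lam : Fin n → ℝ := fun i => α i - m * (β i + γ i) with hlam
  have hlam0 : ∀ i, 0 ≤ lam i := fun i => sub_nonneg.2 (hmle i)
  have hlams : ∑ i, lam i = 1 - 2 * m := by
    have h1 : ∑ i, lam i = (∑ i, α i) - m * ((∑ i, β i) + (∑ i, γ i)) := by
      simp only [hlam, Finset.sum_sub_distrib, ← Finset.mul_sum, Finset.sum_add_distrib]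
    rw [h1, hαs, hβs, hγs]; ring
  have hXβ : (∑ i, β i * x i) ∈ Set.Icc a b := by
    have := (convex_Icc a b).sum_mem (fun i _ => hβ i) hβs (fun i _ => hx i)
    simpa [smul_eq_mul] using this
  have hXγ : (∑ i, γ i * x i) ∈ Set.Icc a b := by
    have := (convex_Icc a b).sum_mem (fun i _ => hγ i) hγs (fun i _ => hx i)
    simpa [smul_eq_mul] using this
  set w : Fin n ⊕ Fin 2 → ℝ := Sum.elim lam ![m, m] with hw
  set z : Fin n ⊕ Fin 2 → ℝ := Sum.elim x ![∑ i, β i * x i, ∑ i, γ i * x i] with hz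
  have hw0 : ∀ j ∈ Finset.univ, 0 ≤ w j := by
    rintro (i | j) -
    · exact hlam0 i
    · fin_cases j <;> simpa [hw] using hm0
  have hws : ∑ j, w j = 1 := by
    rw [Fintype.sum_sum_type]
    simp only [hw, Sum.elim_inl, Sum.elim_inr, Fin.sum_univ_two,
      Matrix.cons_val_zero, Matrix.cons_val_one, Matrix.head_cons]
    rw [hlams]; ring
  have hzs : ∀ j ∈ Finset.univ, z j ∈ Set.Icc a b := by
    rintro (i | j) -
    · exact hx i
    · fin_cases j <;> simpa [hz] using by first | exact hXβ | exact hXγ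
  have key := hf.map_sum_le hw0 hws hzs
  have hsumz : ∑ j, w j • z j = ∑ i, α i * x i := by
    rw [Fintype.sum_sum_type]
    simp only [hw, hz, Sum.elim_inl, Sum.elim_inr, Fin.sum_univ_two,
      Matrix.cons_val_zero, Matrix.cons_val_one, Matrix.head_cons, smul_eq_mul]
    have : ∑ i, lam i * x i
        = (∑ i, α i * x i) - m * ((∑ i, β i * x i) + (∑ i, γ i * x i)) := by
      rw [mul_add, Finset.mul_sum, Finset.mul_sum, ← Finset.sum_add_distrib,
        ← Finset.sum_sub_distrib]
      apply Finset.sum_congr rfl; intro i _; simp only [hlam]; ring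
    rw [this]; ring
  have hsumf : ∑ j, w j • f (z j)
      = (∑ i, α i * f (x i)) - m * ((∑ i, β i * f (x i)) + (∑ i, γ i * f (x i)))
        + m * f (∑ i, β i * x i) + m * f (∑ i, γ i * x i) := by
    rw [Fintype.sum_sum_type]
    simp only [hw, hz, Sum.elim_inl, Sum.elim_inr, Fin.sum_univ_two,
      Matrix.cons_val_zero, Matrix.cons_val_one, Matrix.head_cons, smul_eq_mul]
    have : ∑ i, lam i * f (x i)
        = (∑ i, α i * f (x i)) - m * ((∑ i, β i * f (x i)) + (∑ i, γ i * f (x i))) := by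
      rw [mul_add, Finset.mul_sum, Finset.mul_sum, ← Finset.sum_add_distrib,
        ← Finset.sum_sub_distrib]
      apply Finset.sum_congr rfl; intro i _; simp only [hlam]; ring
    rw [this]; ring
  rw [hsumz, hsumf] at key
  linarith [key]
end

section
/- Let f : [a,b) → ℝ be convex, x ∈ [a,b)^n, p a nonnegative n-tuple and q a positive n-tuple with ∑pᵢ = ∑qᵢ = 1. With m₁ = min_i (pᵢ/qᵢ), define p', x' as in the one-step recursion (p'ᵢ = pᵢ − m₁qᵢ and x'ᵢ = xᵢ when pᵢ/qᵢ ≠ m₁; p'ᵢ = m₁/s and x'ᵢ = ∑ⱼqⱼxⱼ for the s minimizing indices). Then ∑pᵢ f(xᵢ) − m₁·(∑qᵢ f(xᵢ) − f(∑qᵢxᵢ)) = ∑ p'ᵢ f(x'ᵢ). -/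
/-- One-step identity: `∑pᵢf(xᵢ) − m₁·(∑qᵢf(xᵢ) − f(∑qᵢxᵢ)) = ∑p'ᵢf(x'ᵢ)`. -/
theorem stmt5 {a b : ℝ} (f : ℝ → ℝ) (hf : ConvexOn ℝ (Set.Ico a b) f)
    {n : ℕ} (hn : 0 < n) (x : Fin n → ℝ) (hx : ∀ i, x i ∈ Set.Ico a b)
    (p q : Fin n → ℝ) (hp : ∀ i, 0 ≤ p i) (hq : ∀ i, 0 < q i)
    (hps : ∑ i, p i = 1) (hqs : ∑ i, q i = 1)
    (m₁ : ℝ)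
    (hm : m₁ = Finset.univ.inf' ⟨⟨0, hn⟩, Finset.mem_univ _⟩ (fun i => p i / q i))
    (s : ℕ) (hs : s = (Finset.univ.filter (fun i => p i / q i = m₁)).card)
    (p' x' : Fin n → ℝ)
    (hp' : ∀ i, p' i = if p i / q i = m₁ then m₁ / (s : ℝ) else p i - m₁ * q i)
    (hx' : ∀ i, x' i = if p i / q i = m₁ then ∑ j, q j * x j else x i) :
    ∑ i, p i * f (x i) - m₁ * (∑ i, q i * f (x i) - f (∑ i, q i * x i)) =
      ∑ i, p' i * f (x' i) := by
  classical
  set S := Finset.univ.filter (fun i => p i / q i = m₁) with hSdef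
  have hSne : S.Nonempty := by
    obtain ⟨i, _, hi⟩ := Finset.exists_mem_eq_inf'
      (⟨⟨0, hn⟩, Finset.mem_univ _⟩ : (Finset.univ : Finset (Fin n)).Nonempty)
      (fun i => p i / q i)
    exact ⟨i, Finset.mem_filter.2 ⟨Finset.mem_univ _, (hm.trans hi).symm⟩⟩
  have hs0 : (s : ℝ) ≠ 0 := by
    rw [hs]; exact_mod_cast (Finset.card_pos.2 hSne).ne'
  have key : ∀ i, p' i * f (x' i)
      = (if p i / q i = m₁ then (m₁ / s) * f (∑ j, q j * x j)
         else (p i - m₁ * q i) * f (x i)) := by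
    intro i
    rw [hp', hx']
    by_cases h : p i / q i = m₁ <;> simp [h]
  rw [Finset.sum_congr rfl (fun i _ => key i), Finset.sum_ite]
  have hconst : ∑ _i ∈ S, (m₁ / s) * f (∑ j, q j * x j)
      = m₁ * f (∑ j, q j * x j) := by
    rw [Finset.sum_const, ← hs, nsmul_eq_mul]
    field_simp
  have hrest : ∑ i ∈ Finset.univ.filter (fun i => ¬ p i / q i = m₁),
      (p i - m₁ * q i) * f (x i)
      = ∑ i, (p i - m₁ * q i) * f (x i) := by
    rw [Finset.sum_filter]
    refine Finset.sum_congr rfl fun i _ => ?_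
    by_cases h : p i / q i = m₁
    · have : p i = m₁ * q i := by
        rw [div_eq_iff (hq i).ne'] at h; linarith [h]
      simp [h, this]
    · simp [h]
  rw [hconst, hrest]
  have : ∑ i, (p i - m₁ * q i) * f (x i)
      = ∑ i, p i * f (x i) - m₁ * ∑ i, q i * f (x i) := by
    rw [Finset.mul_sum, ← Finset.sum_sub_distrib]
    exact Finset.sum_congr rfl fun i _ => by ring
  rw [this]; ring
end

section
/- Let f : [a,b) → ℝ be convex, x ∈ [a,b)^n, p nonnegative and q₁, q₂ positive n-tuples, each of p, q₁, q₂ summing to 1. Set m₁ = min_i (p_i/q_{1,i}), and define p', x' by the one-step recursion with respect to q₁ (p'ᵢ = pᵢ − m₁q_{1,i}, x'ᵢ = xᵢ for non-minimizing indices; p'ᵢ = m₁/s₁, x'ᵢ = ∑ⱼ q_{1,j}xⱼ for the s₁ minimizing indices), and set m₂ = min_i (p'ᵢ/q_{2,i}). Then J(f,x,p) − m₁·J(f,x,q₁) − m₂·J(f,x',q₂) ≥ 0. -/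
/-- One step of the Dragomir lower bound: `J(f,y,r) ≥ m·J(f,y,q)`. -/
lemma jensen_step {a b : ℝ} (f : ℝ → ℝ) (hf : ConvexOn ℝ (Set.Ico a b) f)
    {n : ℕ} (y : Fin n → ℝ) (hy : ∀ i, y i ∈ Set.Ico a b)
    (r q : Fin n → ℝ) (hq : ∀ i, 0 < q i)
    (hrs : ∑ i, r i = 1) (hqs : ∑ i, q i = 1)
    (m : ℝ) (hm0 : 0 ≤ m) (hm : ∀ i, m * q i ≤ r i) :
    (∑ i, r i * f (y i) - f (∑ i, r i * y i)) -
      m * (∑ i, q i * f (y i) - f (∑ i, q i * y i)) ≥ 0 := by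
  set yb := ∑ i, q i * y i with hyb
  have hybmem : yb ∈ Set.Ico a b := by
    have := (convex_Ico a b).sum_mem (t := Finset.univ) (w := q) (z := y)
      (fun i _ => (hq i).le) hqs (fun i _ => hy i)
    simpa [smul_eq_mul] using this
  set W : Fin (n + 1) → ℝ := Fin.cons m (fun i => r i - m * q i) with hW
  set Z : Fin (n + 1) → ℝ := Fin.cons yb y with hZ
  have hW0 : ∀ i ∈ Finset.univ, 0 ≤ W i := by
    intro i _
    refine Fin.cases ?_ ?_ i <;> simp [hW]
    · exact hm0
    · intro j; linarith [hm j]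
  have hWs : ∑ i, W i = 1 := by
    rw [hW, Fin.sum_cons]
    have : ∑ i, (r i - m * q i) = 1 - m := by
      rw [Finset.sum_sub_distrib, hrs, ← Finset.mul_sum, hqs, mul_one]
    rw [this]; ring
  have hZmem : ∀ i ∈ Finset.univ, Z i ∈ Set.Ico a b := by
    intro i _
    refine Fin.cases ?_ ?_ i <;> simp [hZ]
    · exact hybmem
    · exact fun j => hy j
  have key := hf.map_sum_le hW0 hWs hZmem
  simp only [hW, hZ, Fin.sum_univ_succ, Fin.cons_zero, Fin.cons_succ, smul_eq_mul] at key
  have e1 : ∑ i, (r i - m * q i) * y i = ∑ i, r i * y i - m * yb := by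
    rw [Finset.sum_congr rfl (fun i (_ : i ∈ Finset.univ) =>
      (by ring : (r i - m * q i) * y i = r i * y i - m * (q i * y i))),
      Finset.sum_sub_distrib, ← Finset.mul_sum, hyb]
  have e2 : ∑ i, (r i - m * q i) * f (y i)
      = ∑ i, r i * f (y i) - m * ∑ i, q i * f (y i) := by
    rw [Finset.sum_congr rfl (fun i (_ : i ∈ Finset.univ) =>
      (by ring : (r i - m * q i) * f (y i) = r i * f (y i) - m * (q i * f (y i)))),
      Finset.sum_sub_distrib, ← Finset.mul_sum]
  rw [e1, e2] at key
  have : m * yb + (∑ i, r i * y i - m * yb) = ∑ i, r i * y i := by ring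
  rw [this] at key
  linarith

/-- The `N = 2` case of Theorem 6:
`J(f,x,p) − m₁·J(f,x,q₁) − m₂·J(f,x',q₂) ≥ 0`. -/
theorem stmt6 {a b : ℝ} (f : ℝ → ℝ) (hf : ConvexOn ℝ (Set.Ico a b) f)
    {n : ℕ} (hn : 0 < n) (x : Fin n → ℝ) (hx : ∀ i, x i ∈ Set.Ico a b)
    (p q₁ q₂ : Fin n → ℝ) (hp : ∀ i, 0 ≤ p i)
    (hq₁ : ∀ i, 0 < q₁ i) (hq₂ : ∀ i, 0 < q₂ i)
    (hps : ∑ i, p i = 1) (hq₁s : ∑ i, q₁ i = 1) (hq₂s : ∑ i, q₂ i = 1)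
    (m₁ : ℝ)
    (hm₁ : m₁ = Finset.univ.inf' ⟨⟨0, hn⟩, Finset.mem_univ _⟩ (fun i => p i / q₁ i))
    (s₁ : ℕ) (hs₁ : s₁ = (Finset.univ.filter (fun i => p i / q₁ i = m₁)).card)
    (p' x' : Fin n → ℝ)
    (hp' : ∀ i, p' i = if p i / q₁ i = m₁ then m₁ / (s₁ : ℝ) else p i - m₁ * q₁ i)
    (hx' : ∀ i, x' i = if p i / q₁ i = m₁ then ∑ j, q₁ j * x j else x i)
    (m₂ : ℝ)
    (hm₂ : m₂ = Finset.univ.inf' ⟨⟨0, hn⟩, Finset.mem_univ _⟩ (fun i => p' i / q₂ i)) :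
    (∑ i, p i * f (x i) - f (∑ i, p i * x i)) -
      m₁ * (∑ i, q₁ i * f (x i) - f (∑ i, q₁ i * x i)) -
      m₂ * (∑ i, q₂ i * f (x' i) - f (∑ i, q₂ i * x' i)) ≥ 0 := by
  classical
  set xb := ∑ j, q₁ j * x j with hxb
  -- basic facts about m₁
  have hm₁le : ∀ i, m₁ ≤ p i / q₁ i := fun i => hm₁ ▸ Finset.inf'_le _ (Finset.mem_univ i)
  have hm₁0 : 0 ≤ m₁ := by
    rw [hm₁]
    exact Finset.le_inf' _ _ (fun i _ => div_nonneg (hp i) (hq₁ i).le)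
  have hm₁q : ∀ i, m₁ * q₁ i ≤ p i := fun i => by
    have := hm₁le i
    rw [le_div_iff₀ (hq₁ i)] at this
    linarith
  -- s₁ is positive
  have hs₁pos : 0 < s₁ := by
    obtain ⟨i, _, hi⟩ := Finset.exists_mem_eq_inf' (α := ℝ)
      (⟨⟨0, hn⟩, Finset.mem_univ _⟩ : Finset.univ.Nonempty) (fun i => p i / q₁ i)
    rw [hs₁]
    refine Finset.card_pos.mpr ⟨i, ?_⟩
    simp [hm₁, hi.symm]
  have hs₁ne : (s₁ : ℝ) ≠ 0 := Nat.cast_ne_zero.mpr hs₁pos.ne'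
  -- the minimizing indices have p i = m₁ * q₁ i
  have hmin : ∀ i, p i / q₁ i = m₁ → p i - m₁ * q₁ i = 0 := by
    intro i hi
    rw [div_eq_iff (hq₁ i).ne'] at hi
    linarith
  -- key summation identity
  have hkey : ∀ (v : Fin n → ℝ) (vb : ℝ),
      ∑ i, p' i * (if p i / q₁ i = m₁ then vb else v i)
        = m₁ * vb + ∑ i, (p i - m₁ * q₁ i) * v i := by
    intro v vb
    have h1 : ∀ i, p' i * (if p i / q₁ i = m₁ then vb else v i)
        = if p i / q₁ i = m₁ then m₁ / (s₁ : ℝ) * vb else (p i - m₁ * q₁ i) * v i := by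
      intro i
      rw [hp' i]
      by_cases h : p i / q₁ i = m₁ <;> simp [h]
    rw [Finset.sum_congr rfl (fun i _ => h1 i), Finset.sum_ite]
    have hc : (Finset.univ.filter (fun i => p i / q₁ i = m₁)).card = s₁ := hs₁.symm
    rw [Finset.sum_const, hc, nsmul_eq_mul]
    have h2 : (s₁ : ℝ) * (m₁ / (s₁ : ℝ) * vb) = m₁ * vb := by
      field_simp
    rw [h2]
    congr 1
    rw [← Finset.sum_filter_add_sum_filter_not Finset.univ
      (fun i => p i / q₁ i = m₁) (fun i => (p i - m₁ * q₁ i) * v i)]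
    have h3 : ∑ i ∈ Finset.univ.filter (fun i => p i / q₁ i = m₁),
        (p i - m₁ * q₁ i) * v i = 0 := by
      apply Finset.sum_eq_zero
      intro i hi
      rw [Finset.mem_filter] at hi
      rw [hmin i hi.2, zero_mul]
    rw [h3, zero_add]
  -- facts about p'
  have hp'0 : ∀ i, 0 ≤ p' i := by
    intro i
    rw [hp' i]
    by_cases h : p i / q₁ i = m₁ <;> simp [h]
    · positivity
    · linarith [hm₁q i]
  have hp's : ∑ i, p' i = 1 := by
    have := hkey (fun _ => 1) 1
    simp only [ite_self, mul_one] at this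
    rw [this, Finset.sum_congr rfl (fun i (_ : i ∈ Finset.univ) =>
      (by ring : p i - m₁ * q₁ i = p i - m₁ * q₁ i)),
      Finset.sum_sub_distrib, hps, ← Finset.mul_sum, hq₁s]
    ring
  -- sums over p' and x'
  have hsum_fx : ∑ i, p' i * f (x' i)
      = m₁ * f xb + ∑ i, (p i - m₁ * q₁ i) * f (x i) := by
    have h1 : ∀ i, f (x' i) = if p i / q₁ i = m₁ then f xb else f (x i) := by
      intro i; rw [hx' i, apply_ite f]
    rw [Finset.sum_congr rfl (fun i _ => by rw [h1 i])]
    exact hkey (fun i => f (x i)) (f xb)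
  have hsum_x : ∑ i, p' i * x' i = ∑ i, p i * x i := by
    have h1 : ∑ i, p' i * x' i = m₁ * xb + ∑ i, (p i - m₁ * q₁ i) * x i := by
      rw [Finset.sum_congr rfl (fun i _ => by rw [hx' i])]
      exact hkey x xb
    rw [h1]
    have h2 : ∑ i, (p i - m₁ * q₁ i) * x i
        = ∑ i, p i * x i - m₁ * ∑ i, q₁ i * x i := by
      rw [Finset.sum_congr rfl (fun i (_ : i ∈ Finset.univ) =>
        (by ring : (p i - m₁ * q₁ i) * x i = p i * x i - m₁ * (q₁ i * x i))),
        Finset.sum_sub_distrib, ← Finset.mul_sum]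
    rw [h2, ← hxb]; ring
  -- x' stays in the interval
  have hxbmem : xb ∈ Set.Ico a b := by
    have := (convex_Ico a b).sum_mem (t := Finset.univ) (w := q₁) (z := x)
      (fun i _ => (hq₁ i).le) hq₁s (fun i _ => hx i)
    simpa [smul_eq_mul, hxb] using this
  have hx'mem : ∀ i, x' i ∈ Set.Ico a b := by
    intro i
    rw [hx' i]
    by_cases h : p i / q₁ i = m₁ <;> simp [h]
    · exact hxbmem
    · exact hx i
  -- facts about m₂
  have hm₂0 : 0 ≤ m₂ := by
    rw [hm₂]
    exact Finset.le_inf' _ _ (fun i _ => div_nonneg (hp'0 i) (hq₂ i).le)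
  have hm₂q : ∀ i, m₂ * q₂ i ≤ p' i := fun i => by
    have : m₂ ≤ p' i / q₂ i := hm₂ ▸ Finset.inf'_le _ (Finset.mem_univ i)
    rw [le_div_iff₀ (hq₂ i)] at this
    linarith
  -- apply the one-step lemma to p', q₂, x'
  have main := jensen_step f hf x' hx'mem p' q₂ hq₂ hp's hq₂s m₂ hm₂0 hm₂q
  -- rewrite J(f,x,p) - m₁ J(f,x,q₁) as J(f,x',p')
  have hid : ∑ i, p i * f (x i) - m₁ * ∑ i, q₁ i * f (x i)
      = ∑ i, p' i * f (x' i) - m₁ * f xb := by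
    have h4 : ∑ i, (p i - m₁ * q₁ i) * f (x i)
        = ∑ i, p i * f (x i) - m₁ * ∑ i, q₁ i * f (x i) := by
      rw [Finset.sum_congr rfl (fun i (_ : i ∈ Finset.univ) =>
        (by ring : (p i - m₁ * q₁ i) * f (x i) = p i * f (x i) - m₁ * (q₁ i * f (x i)))),
        Finset.sum_sub_distrib, ← Finset.mul_sum]
    rw [hsum_fx, h4]; ring
  rw [ge_iff_le, ← sub_nonneg] at main ⊢
  have hfx : f (∑ i, p' i * x' i) = f (∑ i, p i * x i) := by rw [hsum_x]
  rw [hfx] at main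
  nlinarith [main, hid]
end

section
/- Let f : [a,b] → ℝ be convex. For k = 1,…,N let n_k with n₁ ≥ n₂ ≥ … ≥ n_N, q_k = (q_{1,k},…,q_{n_k,k}) positive probability tuples, and let p₁ = (p_{1,1},…,p_{n₁,1}) be a nonnegative probability tuple, x₁ ∈ [a,b]^{n₁}. Define recursively m_k = min_{1≤i≤n_k}(p_{i,k}/q_{i,k}), and obtain (p_{k+1}, x_{k+1}) of length n_{k+1} from (p_k, x_k) by deleting all indices where p_{i,k} − m_k q_{i,k} = 0, keeping p_{i,k+1} = p_{i,k} − m_k q_{i,k}, x_{i,k+1} = x_{i,k} at the remaining indices, and appending one final entry p_{n_{k+1},k+1} = m_k with x_{n_{k+1},k+1} = ∑_{i=1}^{n_k} q_{i,k}x_{i,k}. Then J_{n₁}(f,x₁,p₁) − ∑_{k=1}^N m_k·J_{n_k}(f,x_k,q_k) ≥ 0. -/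
lemma sum_reindex_aux {n m : ℕ} (K : Finset (Fin n)) (ι : Fin n → Fin m) (ℓ : Fin m)
    (hinj : Set.InjOn ι ↑K) (hne : ∀ i ∈ K, ι i ≠ ℓ)
    (hsurj : ∀ j : Fin m, j ≠ ℓ → ∃ i ∈ K, ι i = j)
    (F : Fin m → ℝ) :
    ∑ j ∈ Finset.univ.erase ℓ, F j = ∑ i ∈ K, F (ι i) := by
  refine (Finset.sum_bij (fun i (hi : i ∈ K) => ι i) ?_ ?_ ?_ ?_).symm
  · intro i hi
    exact Finset.mem_erase.2 ⟨hne i hi, Finset.mem_univ _⟩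
  · intro i₁ h₁ i₂ h₂ h
    exact hinj h₁ h₂ h
  · intro j hj
    obtain ⟨i, hi, hij⟩ := hsurj j (Finset.mem_erase.1 hj).1
    exact ⟨i, hi, hij⟩
  · intro i hi; rfl

/-- Theorem 8 of the paper: with shrinking tuples (at each step the indices
where `p_{i,k} − m_k q_{i,k} = 0` are deleted and one entry `m_k` with point
`∑ q_{i,k} x_{i,k}` is appended),
`J_{n₁}(f,x₁,p₁) − ∑_{k=1}^N m_k·J_{n_k}(f,x_k,q_k) ≥ 0`. -/
theorem stmt15 {a b : ℝ} (f : ℝ → ℝ) (hf : ConvexOn ℝ (Set.Icc a b) f)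
    (N : ℕ) (n : ℕ → ℕ) (hn : ∀ k, 0 < n k) (hmono : ∀ k, n (k+1) ≤ n k)
    (p x q : (k : ℕ) → Fin (n k) → ℝ)
    (hx : ∀ i, x 0 i ∈ Set.Icc a b)
    (hp0 : ∀ i, 0 ≤ p 0 i) (hps : ∑ i, p 0 i = 1)
    (hq : ∀ k i, 0 < q k i) (hqs : ∀ k, ∑ i, q k i = 1)
    (m : ℕ → ℝ)
    (hm : ∀ k, m k =
      Finset.univ.inf' ⟨⟨0, hn k⟩, Finset.mem_univ _⟩ (fun i => p k i / q k i))
    (K : (k : ℕ) → Finset (Fin (n k)))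
    (hK : ∀ k, K k = Finset.univ.filter (fun i => p k i - m k * q k i ≠ 0))
    (hcard : ∀ k, n (k+1) = (K k).card + 1)
    (ℓ : (k : ℕ) → Fin (n (k+1)))
    (ι : (k : ℕ) → Fin (n k) → Fin (n (k+1)))
    (hinj : ∀ k, Set.InjOn (ι k) ↑(K k))
    (hne : ∀ k, ∀ i ∈ K k, ι k i ≠ ℓ k)
    (hsurj : ∀ k, ∀ j : Fin (n (k+1)), j ≠ ℓ k → ∃ i ∈ K k, ι k i = j)
    (hstep : ∀ k, ∀ i ∈ K k,
      p (k+1) (ι k i) = p k i - m k * q k i ∧ x (k+1) (ι k i) = x k i)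
    (hlast : ∀ k, p (k+1) (ℓ k) = m k ∧ x (k+1) (ℓ k) = ∑ i, q k i * x k i) :
    (∑ i, p 0 i * f (x 0 i) - f (∑ i, p 0 i * x 0 i)) -
      ∑ k ∈ Finset.range N,
        m k * (∑ i, q k i * f (x k i) - f (∑ i, q k i * x k i)) ≥ 0 := by
  -- m k ≤ p k i / q k i for all i
  have hmle : ∀ k i, m k * q k i ≤ p k i := by
    intro k i
    have h := Finset.inf'_le (fun i => p k i / q k i) (Finset.mem_univ i)
    rw [← hm k] at h
    calc m k * q k i ≤ (p k i / q k i) * q k i := by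
          exact mul_le_mul_of_nonneg_right h (hq k i).le
      _ = p k i := div_mul_cancel₀ _ (hq k i).ne'
  -- m k ≥ 0 given p k nonneg
  have hm0 : ∀ k, (∀ i, 0 ≤ p k i) → 0 ≤ m k := by
    intro k hpk
    rw [hm k]
    apply Finset.le_inf'
    intro i _
    exact div_nonneg (hpk i) (hq k i).le
  -- the key sum identity, for any g : ℝ → ℝ
  have hsum : ∀ k (g : ℝ → ℝ),
      ∑ j, p (k+1) j * g (x (k+1) j) =
        ∑ i, p k i * g (x k i) - m k * ∑ i, q k i * g (x k i)
          + m k * g (∑ i, q k i * x k i) := by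
    intro k g
    have h1 : ∑ j, p (k+1) j * g (x (k+1) j) =
        p (k+1) (ℓ k) * g (x (k+1) (ℓ k)) +
          ∑ j ∈ Finset.univ.erase (ℓ k), p (k+1) j * g (x (k+1) j) :=
      (Finset.add_sum_erase _ _ (Finset.mem_univ _)).symm
    rw [h1, (hlast k).1, (hlast k).2,
      sum_reindex_aux (K k) (ι k) (ℓ k) (hinj k) (hne k) (hsurj k)]
    have h2 : ∑ i ∈ K k, p (k+1) (ι k i) * g (x (k+1) (ι k i)) =
        ∑ i ∈ K k, (p k i - m k * q k i) * g (x k i) := by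
      refine Finset.sum_congr rfl fun i hi => ?_
      rw [(hstep k i hi).1, (hstep k i hi).2]
    rw [h2]
    have h3 : ∑ i ∈ K k, (p k i - m k * q k i) * g (x k i) =
        ∑ i, (p k i - m k * q k i) * g (x k i) := by
      refine Finset.sum_subset (Finset.subset_univ _) fun i _ hi => ?_
      have : p k i - m k * q k i = 0 := by
        by_contra h
        exact hi (by rw [hK k]; exact Finset.mem_filter.2 ⟨Finset.mem_univ _, h⟩)
      rw [this, zero_mul]
    rw [h3]
    simp only [sub_mul, Finset.sum_sub_distrib, mul_assoc, ← Finset.mul_sum]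
    ring
  -- invariants
  have inv : ∀ k, (∀ i, 0 ≤ p k i) ∧ (∑ i, p k i = 1) ∧ (∀ i, x k i ∈ Set.Icc a b) := by
    intro k
    induction k with
    | zero => exact ⟨hp0, hps, hx⟩
    | succ k ih =>
      obtain ⟨hpk, hpks, hxk⟩ := ih
      have hmk := hm0 k hpk
      refine ⟨?_, ?_, ?_⟩
      · intro j
        by_cases hj : j = ℓ k
        · rw [hj, (hlast k).1]; exact hmk
        · obtain ⟨i, hi, rfl⟩ := hsurj k j hj
          rw [(hstep k i hi).1]
          linarith [hmle k i]
      · have := hsum k (fun _ => 1)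
        simp only [mul_one] at this
        rw [this, hpks, hqs k]; ring
      · intro j
        by_cases hj : j = ℓ k
        · rw [hj, (hlast k).2]
          have : ∑ i, q k i • x k i ∈ Set.Icc a b := by
            refine (convex_Icc a b).sum_mem (fun i _ => (hq k i).le) (hqs k)
              (fun i _ => hxk i)
          simpa using this
        · obtain ⟨i, hi, rfl⟩ := hsurj k j hj
          rw [(hstep k i hi).2]; exact hxk i
  -- telescoping
  have main : ∀ M, (∑ i, p 0 i * f (x 0 i) - f (∑ i, p 0 i * x 0 i)) -
      ∑ k ∈ Finset.range M,
        m k * (∑ i, q k i * f (x k i) - f (∑ i, q k i * x k i)) =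
      ∑ i, p M i * f (x M i) - f (∑ i, p M i * x M i) := by
    intro M
    induction M with
    | zero => simp
    | succ M ih =>
      rw [Finset.sum_range_succ, ← sub_sub, ih, hsum M f]
      have hid : ∑ i, p (M+1) i * x (M+1) i = ∑ i, p M i * x M i := by
        have := hsum M id
        simpa using this
      rw [hid]; ring
  rw [main N]
  obtain ⟨hpN, hpNs, hxN⟩ := inv N
  have := hf.map_sum_le (t := Finset.univ) (w := p N) (p := x N)
    (fun i _ => hpN i) hpNs (fun i _ => hxN i)
  simp only [smul_eq_mul] at this
  linarith
end

section
/- In the recursive construction of Theorem 9 (the shrinking-tuple analogue of the upper bound), if M₁ = max_{1≤i≤n₁}(p_{i,1}/q_{i,1}) = p_{j₁,1}/q_{j₁,1}, then for every k ≥ 2 the only positive entry among p_{1,k},…,p_{n_k,k} is the one at index j₁, and consequently n_k = n₂ for all k = 2,…,N. -/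
/-- Claim (2.18) in Theorem 9: for every `k ≥ 2` the only positive entry of
`p_k` is the appended one (tracking the maximizing index `j₁`), and
consequently the lengths satisfy `n_k = n₂` for `k = 2,…,N`. -/
theorem stmt17 (N : ℕ) (n : ℕ → ℕ) (hn : ∀ k, 0 < n k)
    (hmono : ∀ k, n (k+1) ≤ n k)
    (p x q : (k : ℕ) → Fin (n k) → ℝ)
    (hp0 : ∀ i, 0 ≤ p 0 i) (hps : ∑ i, p 0 i = 1)
    (hq : ∀ k i, 0 < q k i) (hqs : ∀ k, ∑ i, q k i = 1)
    (M : ℕ → ℝ)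
    (hM : ∀ k, M k =
      Finset.univ.sup' ⟨⟨0, hn k⟩, Finset.mem_univ _⟩ (fun i => p k i / q k i))
    (j₁ : Fin (n 0)) (hj₁ : M 0 = p 0 j₁ / q 0 j₁)
    (K : (k : ℕ) → Finset (Fin (n k)))
    (hK : ∀ k, K k = Finset.univ.filter (fun i => p k i - M k * q k i ≠ 0))
    (hcard : ∀ k, n (k+1) = (K k).card + 1)
    (ℓ : (k : ℕ) → Fin (n (k+1)))
    (ι : (k : ℕ) → Fin (n k) → Fin (n (k+1)))
    (hinj : ∀ k, Set.InjOn (ι k) ↑(K k))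
    (hne : ∀ k, ∀ i ∈ K k, ι k i ≠ ℓ k)
    (hsurj : ∀ k, ∀ j : Fin (n (k+1)), j ≠ ℓ k → ∃ i ∈ K k, ι k i = j)
    (hstep : ∀ k, ∀ i ∈ K k,
      p (k+1) (ι k i) = p k i - M k * q k i ∧ x (k+1) (ι k i) = x k i)
    (hlast : ∀ k, p (k+1) (ℓ k) = M k ∧ x (k+1) (ℓ k) = ∑ i, q k i * x k i) :
    (∀ k, ∀ i : Fin (n (k+1)), 0 < p (k+1) i → i = ℓ k) ∧
      (∀ k, 1 ≤ k → n k = n 1) := by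
  -- `M k` bounds `p k i / q k i`, hence `p k i ≤ M k * q k i`.
  have hMle : ∀ k i, p k i ≤ M k * q k i := by
    intro k i
    have h := Finset.le_sup' (fun i => p k i / q k i) (Finset.mem_univ i)
    rw [← hM k] at h
    exact (div_le_iff₀ (hq k i)).mp h
  -- Part 1: the only possibly-positive entry of `p (k+1)` is at `ℓ k`.
  have part1 : ∀ k, ∀ i : Fin (n (k+1)), 0 < p (k+1) i → i = ℓ k := by
    intro k i hpos
    by_contra hne'
    obtain ⟨i0, hi0, rfl⟩ := hsurj k i hne'
    have h1 := (hstep k i0 hi0).1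
    have h2 : p k i0 - M k * q k i0 ≤ 0 := sub_nonpos.mpr (hMle k i0)
    rw [h1] at hpos; linarith
  -- `M 0 > 0` since the nonnegative `p 0` sums to 1.
  have hM0 : 0 < M 0 := by
    obtain ⟨i, hi⟩ : ∃ i, 0 < p 0 i := by
      by_contra h
      push_neg at h
      have hle : ∑ i, p 0 i ≤ 0 := Finset.sum_nonpos (fun i _ => h i)
      rw [hps] at hle; linarith
    have h := Finset.le_sup' (fun i => p 0 i / q 0 i) (Finset.mem_univ i)
    rw [← hM 0] at h
    exact lt_of_lt_of_le (div_pos hi (hq 0 i)) h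
  -- `M k > 0` for all `k`.
  have hMpos : ∀ k, 0 < M k := by
    intro k
    induction k with
    | zero => exact hM0
    | succ k ih =>
      have h1 : 0 < p (k+1) (ℓ k) := by rw [(hlast k).1]; exact ih
      have h2 := Finset.le_sup' (fun i => p (k+1) i / q (k+1) i)
        (Finset.mem_univ (ℓ k))
      rw [← hM (k+1)] at h2
      exact lt_of_lt_of_le (div_pos h1 (hq (k+1) (ℓ k))) h2
  -- From step `k+1` on, the lengths are constant.
  have hstepn : ∀ k, n (k+2) = n (k+1) := by
    intro k
    have hsub : Finset.univ.erase (ℓ k) ⊆ K (k+1) := by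
      intro i hi
      rw [hK]
      simp only [Finset.mem_filter, Finset.mem_univ, true_and]
      have hiℓ : i ≠ ℓ k := (Finset.mem_erase.mp hi).1
      have hple : p (k+1) i ≤ 0 := by
        by_contra h
        push_neg at h
        exact hiℓ (part1 k i h)
      have hpos : 0 < M (k+1) * q (k+1) i :=
        mul_pos (hMpos (k+1)) (hq (k+1) i)
      intro heq
      linarith [heq]
    have hc1 : n (k+1) - 1 ≤ (K (k+1)).card := by
      calc n (k+1) - 1 = (Finset.univ.erase (ℓ k)).card := by
            rw [Finset.card_erase_of_mem (Finset.mem_univ _), Finset.card_univ,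
              Fintype.card_fin]
      _ ≤ _ := Finset.card_le_card hsub
    have h2 : n (k+2) = (K (k+1)).card + 1 := hcard (k+1)
    have h3 : n (k+2) ≤ n (k+1) := hmono (k+1)
    have h4 := hn (k+1)
    omega
  refine ⟨part1, ?_⟩
  intro k
  induction k with
  | zero => omega
  | succ m ih =>
    intro _
    match m, ih with
    | 0, _ => rfl
    | m'+1, ih => rw [hstepn m']; exact ih (by omega)
end
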